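/- Let f : S → E be a strictly increasing function from a set of epsilon numbers into the epsilon numbers, and let x be an ordinal with Ep(x) ⊆ S. If x is a limit ordinal, then x[f] is a limit ordinal. -/

import Mathlib

/-!
If `x` is an epsilon number, `x[f] = f x` is one too, hence a limit. Otherwise write `x` in
Cantor normal form `ω ^ e₁ * c₁ + ⋯ + ω ^ eₙ * cₙ`, so that
`x[f] = ω ^ e₁[f] * c₁ + ⋯ + ω ^ eₙ[f] * cₙ`.
Since `x` is a limit, `eₙ ≠ 0`; substitution keeps nonzero ordinals nonzero (the values of `f`
are epsilon numbers), so `eₙ[f] ≠ 0` and `x[f]` ends in a limit summand.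
-/

open Ordinal

/-- An ordinal is an epsilon number if it is a fixed point of `ω ^ ·`. -/
def IsEpsilon (x : Ordinal.{0}) : Prop := ω ^ x = x

theorem cnf_fst_lt {x : Ordinal.{0}} (h : ¬ ω ^ x = x) {p : Ordinal × Ordinal}
    (hp : p ∈ CNF ω x) : p.1 < x := by
  have hx : x ≠ 0 := by
    rintro rfl
    simp [Ordinal.CNF.zero_right] at hp
  have h1 : p.1 ≤ Ordinal.log ω x := Ordinal.CNF.fst_le_log hp
  have h2 : Ordinal.log ω x < x := by
    rcases lt_or_eq_of_le (Ordinal.log_le_self ω x) with h' | h'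
    · exact h'
    · exfalso
      have hle := Ordinal.opow_log_le_self ω hx
      rw [h'] at hle
      exact h (le_antisymm hle (Ordinal.right_le_opow x one_lt_omega0))
  exact lt_of_le_of_lt h1 h2

open scoped Classical in
/-- The set of epsilon numbers occurring hereditarily in the Cantor normal form of `x`. -/
noncomputable def Ep (x : Ordinal.{0}) : Set Ordinal.{0} :=
  if h : ω ^ x = x then {x}
  else ⋃ p : {q // q ∈ CNF ω x}, Ep p.1.1
termination_by x
decreasing_by exact cnf_fst_lt h p.2

open scoped Classical in
/-- Simultaneous substitution of the epsilon numbers occurring hereditarily in the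
Cantor normal form of `x` by their values under `f`. -/
noncomputable def subst (f : Ordinal.{0} → Ordinal.{0}) (x : Ordinal.{0}) : Ordinal.{0} :=
  if h : ω ^ x = x then f x
  else (((CNF ω x).attach).map (fun p => ω ^ subst f p.1.1 * p.1.2)).sum
termination_by x
decreasing_by exact cnf_fst_lt h p.2

open Order

theorem IsEpsilon.ne_zero {e : Ordinal.{0}} (he : IsEpsilon e) : e ≠ 0 := by
  rintro rfl
  simp [IsEpsilon] at he

theorem IsEpsilon.isSuccLimit {e : Ordinal.{0}} (he : IsEpsilon e) : IsSuccLimit e := by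
  rw [← show ω ^ e = e from he]
  exact isSuccLimit_opow_left isSuccLimit_omega0 he.ne_zero

theorem Ordinal.CNF_sum (b o : Ordinal) :
    ((CNF b o).map fun p => b ^ p.1 * p.2).sum = o := by
  rw [List.sum_eq_foldr, List.foldr_map]
  exact CNF.foldr b o

theorem Ordinal.not_isSuccLimit_add_of_lt_omega0 (a : Ordinal) {c : Ordinal} (hc₀ : 0 < c)
    (hc : c < ω) : ¬ IsSuccLimit (a + c) := by
  obtain ⟨n, rfl⟩ := lt_omega0.1 hc
  obtain ⟨m, rfl⟩ := Nat.exists_eq_succ_of_ne_zero (by exact_mod_cast hc₀.ne' : n ≠ 0)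
  rw [Nat.cast_succ, ← add_assoc, ← succ_eq_add_one]
  exact not_isSuccLimit_succ _

theorem Ordinal.CNF_last_fst_ne_zero {x : Ordinal} (hx : IsSuccLimit x)
    {l : List (Ordinal × Ordinal)} {q : Ordinal × Ordinal} (hlq : CNF ω x = l ++ [q]) :
    q.1 ≠ 0 := by
  have hq : q ∈ CNF ω x := by simp [hlq]
  intro hq₀
  have hsum := CNF_sum ω x
  rw [hlq, List.map_append, List.sum_append, List.map_singleton, List.sum_singleton, hq₀,
    opow_zero, one_mul] at hsum
  rw [← hsum] at hx
  exact not_isSuccLimit_add_of_lt_omega0 _ (CNF.snd_pos hq) (CNF.snd_lt one_lt_omega0 hq) hx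

theorem mem_Ep_self {x : Ordinal.{0}} (h : IsEpsilon x) : x ∈ Ep x := by
  rw [Ep, dif_pos (show ω ^ x = x from h)]
  exact Set.mem_singleton x

theorem Ep_subset_of_mem_CNF {x : Ordinal.{0}} (h : ¬ IsEpsilon x) {q : Ordinal × Ordinal}
    (hq : q ∈ CNF ω x) : Ep q.1 ⊆ Ep x := by
  rw [Ep.eq_def x, dif_neg (show ¬ ω ^ x = x from h)]
  exact Set.subset_iUnion (fun p : {q // q ∈ CNF ω x} => Ep p.1.1) ⟨q, hq⟩

theorem subst_of_isEpsilon (f : Ordinal → Ordinal) {x : Ordinal.{0}} (h : IsEpsilon x) :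
    subst f x = f x := by
  rw [subst, dif_pos (show ω ^ x = x from h)]

theorem subst_of_not_isEpsilon (f : Ordinal → Ordinal) {x : Ordinal.{0}} (h : ¬ IsEpsilon x) :
    subst f x = ((CNF ω x).map fun q => ω ^ subst f q.1 * q.2).sum := by
  rw [subst, dif_neg (show ¬ ω ^ x = x from h)]
  exact congrArg List.sum
    (List.attach_map_val (f := fun q : Ordinal × Ordinal => ω ^ subst f q.1 * q.2))

theorem subst_ne_zero {f : Ordinal → Ordinal} {x : Ordinal} (hf : ∀ e ∈ Ep x, f e ≠ 0)
    (hx : x ≠ 0) : subst f x ≠ 0 := by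
  by_cases h : IsEpsilon x
  · rw [subst_of_isEpsilon f h]
    exact hf x (mem_Ep_self h)
  · have hCNF := CNF.ne_zero (b := ω) hx
    rw [subst_of_not_isEpsilon f h, hCNF, List.map_cons, List.sum_cons]
    refine (lt_of_lt_of_le (mul_pos (opow_pos _ omega0_pos) ?_) le_self_add).ne'
    exact CNF.snd_pos (hCNF ▸ List.mem_cons_self)

theorem stmt12_general (S : Set Ordinal.{0}) (f : Ordinal → Ordinal)
    (hfE : ∀ e ∈ S, IsEpsilon (f e))
    (x : Ordinal) (hx : Ep x ⊆ S) (hlim : Order.IsSuccLimit x) :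
    Order.IsSuccLimit (subst f x) := by
  by_cases h : IsEpsilon x
  · rw [subst_of_isEpsilon f h]
    exact (hfE x (hx (mem_Ep_self h))).isSuccLimit
  obtain hnil | ⟨l, q, hlq⟩ := (CNF ω x).eq_nil_or_concat
  · exact absurd (hnil ▸ CNF_sum ω x).symm hlim.ne_zero
  rw [List.concat_eq_append] at hlq
  have hq : q ∈ CNF ω x := by simp [hlq]
  have hfq : ∀ e ∈ Ep q.1, f e ≠ 0 := fun e he =>
    (hfE e (hx (Ep_subset_of_mem_CNF h hq he))).ne_zero
  have hsq : subst f q.1 ≠ 0 := subst_ne_zero hfq (CNF_last_fst_ne_zero hlim hlq)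
  rw [subst_of_not_isEpsilon f h, hlq, List.map_append, List.sum_append, List.map_singleton,
    List.sum_singleton]
  exact isSuccLimit_add _ <|
    isSuccLimit_mul_left (isSuccLimit_opow_left isSuccLimit_omega0 hsq) (CNF.snd_pos hq)

theorem stmt12 (S : Set Ordinal.{0}) (f : Ordinal → Ordinal)
    (hS : ∀ e ∈ S, IsEpsilon e) (hfE : ∀ e ∈ S, IsEpsilon (f e))
    (hf : StrictMonoOn f S)
    (x : Ordinal) (hx : Ep x ⊆ S) (hlim : Order.IsSuccLimit x) :
    Order.IsSuccLimit (subst f x) :=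
  stmt12_general S f hfE x hx hlim
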